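/- With G*_U as above: the set G*_U[p₂] of elements of G*_U divisible by p₂^n for every n equals {r·y : r ∈ R_{p₂}}, i.e., the cyclic R_{p₂}-submodule generated by y. -/

import Mathlib

/-- The basis vector `x_α` of the ambient ℚ-vector space. -/
noncomputable def xx {ι : Type*} (α : ι) : (ι ⊕ Unit ⊕ ι) →₀ ℚ :=
  Finsupp.single (Sum.inl α) 1

/-- The basis vector `y` of the ambient ℚ-vector space. -/
noncomputable def yy (ι : Type*) : (ι ⊕ Unit ⊕ ι) →₀ ℚ :=
  Finsupp.single (Sum.inr (Sum.inl ())) 1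

/-- The basis vector `z_α` of the ambient ℚ-vector space. -/
noncomputable def zz {ι : Type*} (α : ι) : (ι ⊕ Unit ⊕ ι) →₀ ℚ :=
  Finsupp.single (Sum.inr (Sum.inr α)) 1

/-- The group `G*_U` of the construction. -/
noncomputable def Gstar {ι : Type*} (p₁ p₂ p₃ p₄ p₅ : ℕ) (U : Set ι) :
    AddSubgroup ((ι ⊕ Unit ⊕ ι) →₀ ℚ) :=
  AddSubgroup.closure
    ({v | ∃ (α : ι) (n : ℕ), v = ((p₁ : ℚ) ^ n)⁻¹ • xx α} ∪
     {v | ∃ n : ℕ, v = ((p₂ : ℚ) ^ n)⁻¹ • yy ι} ∪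
     {v | ∃ (α : ι) (n : ℕ), v = ((p₃ : ℚ) ^ n)⁻¹ • zz α} ∪
     {v | ∃ α ∈ U, ∃ n : ℕ, v = ((p₄ : ℚ) ^ n)⁻¹ • (xx α + zz α)} ∪
     {v | ∃ α ∈ U, ∃ n : ℕ, v = ((p₅ : ℚ) ^ n)⁻¹ • (xx α + yy ι + zz α)})


/-- rationals writable as m / q^k -/
def Dp (q : ℕ) : AddSubgroup ℚ where
  carrier := {r | ∃ (m : ℤ) (k : ℕ), r * (q : ℚ) ^ k = m}
  zero_mem' := ⟨0, 0, by simp⟩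
  add_mem' := by
    rintro a b ⟨m, k, hm⟩ ⟨m', k', hm'⟩
    refine ⟨m * q ^ k' + m' * q ^ k, k + k', ?_⟩
    push_cast
    linear_combination (q:ℚ) ^ k' * hm + (q:ℚ) ^ k * hm'
  neg_mem' := by
    rintro a ⟨m, k, hm⟩
    exact ⟨-m, k, by push_cast; linear_combination -hm⟩

lemma mem_Dp {q : ℕ} {r : ℚ} : r ∈ Dp q ↔ ∃ (m : ℤ) (k : ℕ), r * (q : ℚ) ^ k = m :=
  Iff.rfl

lemma Dp_mono {q Q : ℕ} (h : q ∣ Q) : Dp q ≤ Dp Q := by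
  rintro r ⟨m, k, hm⟩
  obtain ⟨c, rfl⟩ := h
  refine ⟨m * c ^ k, k, ?_⟩
  push_cast
  linear_combination (c:ℚ) ^ k * hm

lemma int_mem_Dp {q : ℕ} (m : ℤ) : (m : ℚ) ∈ Dp q := ⟨m, 0, by simp⟩

lemma mem_Dp_one {r : ℚ} : r ∈ Dp 1 ↔ ∃ m : ℤ, r = m := by
  simp [mem_Dp]

lemma inv_pow_mem_Dp {q : ℕ} (hq : q ≠ 0) (n : ℕ) : ((q : ℚ) ^ n)⁻¹ ∈ Dp q := by
  refine ⟨1, n, ?_⟩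
  rw [inv_mul_cancel₀ (by positivity)]
  simp

lemma mem_Dp_one_of_coprime {q q' : ℕ} (hq : q ≠ 0)
    (hcop : Nat.Coprime q q') {r : ℚ} (h : r ∈ Dp q) (h' : r ∈ Dp q') : r ∈ Dp 1 := by
  obtain ⟨m, k, hm⟩ := h
  obtain ⟨m', k', hm'⟩ := h'
  have key : m * (q' : ℤ) ^ k' = m' * (q : ℤ) ^ k := by
    have hq2 : ((m : ℚ) * (q' : ℚ) ^ k') = ((m' : ℚ) * (q : ℚ) ^ k) := by
      linear_combination (q:ℚ) ^ k * hm' - (q':ℚ) ^ k' * hm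
    exact_mod_cast hq2
  have hdvd : (q : ℤ) ^ k ∣ m := by
    have hco : IsCoprime ((q : ℤ) ^ k) ((q' : ℤ) ^ k') := by
      apply IsCoprime.pow
      rw [Int.isCoprime_iff_gcd_eq_one]
      exact_mod_cast hcop
    exact hco.dvd_of_dvd_mul_right ⟨m', by linarith [key]⟩
  obtain ⟨m'', rfl⟩ := hdvd
  refine mem_Dp_one.2 ⟨m'', ?_⟩
  have hqk : ((q : ℚ)) ^ k ≠ 0 := by positivity
  apply mul_right_cancel₀ hqk
  rw [hm]; push_cast; ring

/-- `Dp q` as a subring. -/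
def Dpr (q : ℕ) : Subring ℚ where
  carrier := {r | ∃ (m : ℤ) (k : ℕ), r * (q : ℚ) ^ k = m}
  zero_mem' := ⟨0, 0, by simp⟩
  add_mem' := (Dp q).add_mem'
  neg_mem' := (Dp q).neg_mem'
  one_mem' := ⟨1, 0, by simp⟩
  mul_mem' := by
    rintro a b ⟨m, k, hm⟩ ⟨m', k', hm'⟩
    refine ⟨m * m', k + k', ?_⟩
    push_cast
    linear_combination (b * (q:ℚ) ^ k') * hm + (m : ℚ) * hm'

lemma Dp_eq_closure {q : ℕ} (hq : q ≠ 0) {r : ℚ} :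
    r ∈ Dp q ↔ r ∈ Subring.closure {((q : ℚ))⁻¹} := by
  constructor
  · rintro ⟨m, k, hm⟩
    have hqk : ((q:ℚ)) ^ k ≠ 0 := by positivity
    have hr : r = (m : ℚ) * ((q : ℚ)⁻¹) ^ k := by
      rw [inv_pow]
      field_simp
      linarith [hm]
    rw [hr]
    have h1 : ((q:ℚ))⁻¹ ∈ Subring.closure {((q : ℚ))⁻¹} :=
      Subring.subset_closure (Set.mem_singleton _)
    exact mul_mem (intCast_mem _ m) (pow_mem h1 k)
  · intro h
    have hsub : Subring.closure {((q : ℚ))⁻¹} ≤ Dpr q := by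
      rw [Subring.closure_le]
      rintro x rfl
      exact ⟨1, 1, by field_simp; norm_num⟩
    exact hsub h

lemma eq_zero_of_forall_dvd {p Q : ℕ} (hp : p.Prime) (hQ : ¬ p ∣ Q)
    {a : ℚ} (h : ∀ n : ℕ, ∃ c ∈ Dp Q, a = (p : ℚ) ^ n * c) : a = 0 := by
  by_contra ha
  have hnum : a.num ≠ 0 := Rat.num_ne_zero.2 ha
  have key : ∀ n : ℕ, (p : ℤ) ^ n ∣ a.num := by
    intro n
    obtain ⟨c, ⟨m, k, hm⟩, hc⟩ := h n
    have hq : (a.num : ℚ) * (Q : ℚ) ^ k = (p : ℚ) ^ n * ((m : ℚ) * a.den) := by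
      have h1 : a * (Q : ℚ) ^ k = (p : ℚ) ^ n * m := by
        rw [hc]; linear_combination (p:ℚ) ^ n * hm
      have h2 : (a.num : ℚ) = a * a.den := by
        rw [Rat.mul_den_eq_num]
      rw [h2]; linear_combination (a.den : ℚ) * h1
    have hz : a.num * (Q : ℤ) ^ k = (p : ℤ) ^ n * (m * a.den) := by
      exact_mod_cast hq
    have hco : IsCoprime ((p : ℤ) ^ n) ((Q : ℤ) ^ k) := by
      apply IsCoprime.pow
      rw [Int.isCoprime_iff_gcd_eq_one]
      exact_mod_cast hp.coprime_iff_not_dvd.2 hQ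
    exact hco.dvd_of_dvd_mul_right ⟨m * a.den, hz⟩
  set N := a.num.natAbs with hN
  have h1 : p ^ N ∣ N := by
    have h0 := Int.natAbs_dvd_natAbs.2 (key N)
    simpa [Int.natAbs_pow] using h0
  have h2 : p ^ N ≤ N := Nat.le_of_dvd (Int.natAbs_pos.2 hnum) h1
  exact absurd h2 (not_le.2 (Nat.lt_pow_self hp.one_lt : N < p ^ N))

/-- helper to push memberships through closures -/
lemma mem_hom_of_closure {M N : Type*} [AddCommGroup M] [AddCommGroup N]
    (F : M →+ N) (H : AddSubgroup N) {s : Set M} (h : ∀ v ∈ s, F v ∈ H) :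
    ∀ g ∈ AddSubgroup.closure s, F g ∈ H := fun _ hg =>
  (AddSubgroup.closure_le (H.comap F)).2 h hg

/-- weight for the functional vanishing on `x + y + z` generators -/
noncomputable def w5 {ι : Type*} : (ι ⊕ Unit ⊕ ι) → ℚ :=
  Sum.elim (fun _ => (-1 : ℚ)) (Sum.elim (fun _ => (1 : ℚ)) (fun _ => (0 : ℚ)))

/-- weight selecting the `x` coordinates -/
noncomputable def wx {ι : Type*} : (ι ⊕ Unit ⊕ ι) → ℚ :=
  Sum.elim (fun _ => (1 : ℚ)) (fun _ => (0 : ℚ))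

lemma F5_eq {ι : Type*} (g : (ι ⊕ Unit ⊕ ι) →₀ ℚ) :
    Finsupp.linearCombination ℚ w5 g =
      g (Sum.inr (Sum.inl ())) - Finsupp.linearCombination ℚ wx g := by
  classical
  induction g using Finsupp.induction_linear with
  | zero => simp
  | add f g hf hg => simp only [map_add, Finsupp.add_apply, hf, hg]; ring
  | single i c =>
    rcases i with α | u | β
    · simp [w5, wx, Finsupp.single_apply]
    · simp [w5, wx, Finsupp.single_apply]
    · simp [w5, wx, Finsupp.single_apply]

theorem stmt_12 {ι : Type*} (p₁ p₂ p₃ p₄ p₅ : ℕ)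
    (hp : ∀ p ∈ [p₁, p₂, p₃, p₄, p₅], p.Prime)
    (hne : [p₁, p₂, p₃, p₄, p₅].Pairwise (· ≠ ·)) (U : Set ι) :
    {g | g ∈ Gstar p₁ p₂ p₃ p₄ p₅ U ∧
        ∀ n : ℕ, ∃ h ∈ Gstar p₁ p₂ p₃ p₄ p₅ U, g = ((p₂ : ℤ) ^ n) • h} =
      {v | ∃ r : ℚ, r ∈ Subring.closure {((p₂ : ℚ))⁻¹} ∧ v = r • yy ι} := by
  classical
  have hp1 : p₁.Prime := hp _ (by simp)
  have hp2 : p₂.Prime := hp _ (by simp)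
  have hp3 : p₃.Prime := hp _ (by simp)
  have hp4 : p₄.Prime := hp _ (by simp)
  have hp5 : p₅.Prime := hp _ (by simp)
  simp only [List.pairwise_cons, List.mem_cons] at hne
  have h12 : p₁ ≠ p₂ := hne.1 p₂ (by simp)
  have h13 : p₁ ≠ p₃ := hne.1 p₃ (by simp)
  have h14 : p₁ ≠ p₄ := hne.1 p₄ (by simp)
  have h15 : p₁ ≠ p₅ := hne.1 p₅ (by simp)
  have h23 : p₂ ≠ p₃ := hne.2.1 p₃ (by simp)
  have h24 : p₂ ≠ p₄ := hne.2.1 p₄ (by simp)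
  have h25 : p₂ ≠ p₅ := hne.2.1 p₅ (by simp)
  have h34 : p₃ ≠ p₄ := hne.2.2.1 p₄ (by simp)
  have h35 : p₃ ≠ p₅ := hne.2.2.1 p₅ (by simp)
  have h45 : p₄ ≠ p₅ := hne.2.2.2.1 p₅ (by simp)
  have hp10 : p₁ ≠ 0 := hp1.ne_zero
  have hp20 : p₂ ≠ 0 := hp2.ne_zero
  have hp30 : p₃ ≠ 0 := hp3.ne_zero
  have hp40 : p₄ ≠ 0 := hp4.ne_zero
  have hp50 : p₅ ≠ 0 := hp5.ne_zero
  -- coordinate bounds on all of Gstar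
  have hGx : ∀ (α : ι), ∀ g' ∈ Gstar p₁ p₂ p₃ p₄ p₅ U,
      g' (Sum.inl α) ∈ Dp (p₁ * p₄ * p₅) := by
    intro α g' hg'
    refine mem_hom_of_closure (Finsupp.applyAddHom (Sum.inl α)) _ ?_ g' hg'
    rintro v ((((⟨β, n, rfl⟩ | ⟨n, rfl⟩) | ⟨β, n, rfl⟩) | ⟨β, -, n, rfl⟩) | ⟨β, -, n, rfl⟩)
    · rcases eq_or_ne β α with rfl | hβ
      · simpa [xx, Finsupp.single_apply] using
          Dp_mono (Q := p₁ * p₄ * p₅) ⟨p₄ * p₅, by ring⟩ (inv_pow_mem_Dp hp10 n)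
      · simpa [xx, Finsupp.single_apply, hβ] using (Dp (p₁ * p₄ * p₅)).zero_mem
    · simpa [yy, Finsupp.single_apply] using (Dp (p₁ * p₄ * p₅)).zero_mem
    · simpa [zz, Finsupp.single_apply] using (Dp (p₁ * p₄ * p₅)).zero_mem
    · rcases eq_or_ne β α with rfl | hβ
      · simpa [xx, zz, Finsupp.single_apply] using
          Dp_mono (Q := p₁ * p₄ * p₅) ⟨p₁ * p₅, by ring⟩ (inv_pow_mem_Dp hp40 n)
      · simpa [xx, zz, Finsupp.single_apply, hβ] using (Dp (p₁ * p₄ * p₅)).zero_mem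
    · rcases eq_or_ne β α with rfl | hβ
      · simpa [xx, yy, zz, Finsupp.single_apply] using
          Dp_mono (Q := p₁ * p₄ * p₅) ⟨p₁ * p₄, by ring⟩ (inv_pow_mem_Dp hp50 n)
      · simpa [xx, yy, zz, Finsupp.single_apply, hβ] using (Dp (p₁ * p₄ * p₅)).zero_mem
  have hGz : ∀ (α : ι), ∀ g' ∈ Gstar p₁ p₂ p₃ p₄ p₅ U,
      g' (Sum.inr (Sum.inr α)) ∈ Dp (p₃ * p₄ * p₅) := by
    intro α g' hg'
    refine mem_hom_of_closure (Finsupp.applyAddHom (Sum.inr (Sum.inr α))) _ ?_ g' hg'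
    rintro v ((((⟨β, n, rfl⟩ | ⟨n, rfl⟩) | ⟨β, n, rfl⟩) | ⟨β, -, n, rfl⟩) | ⟨β, -, n, rfl⟩)
    · simpa [xx, Finsupp.single_apply] using (Dp (p₃ * p₄ * p₅)).zero_mem
    · simpa [yy, Finsupp.single_apply] using (Dp (p₃ * p₄ * p₅)).zero_mem
    · rcases eq_or_ne β α with rfl | hβ
      · simpa [zz, Finsupp.single_apply] using
          Dp_mono (Q := p₃ * p₄ * p₅) ⟨p₄ * p₅, by ring⟩ (inv_pow_mem_Dp hp30 n)
      · simpa [zz, Finsupp.single_apply, hβ] using (Dp (p₃ * p₄ * p₅)).zero_mem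
    · rcases eq_or_ne β α with rfl | hβ
      · simpa [xx, zz, Finsupp.single_apply] using
          Dp_mono (Q := p₃ * p₄ * p₅) ⟨p₃ * p₅, by ring⟩ (inv_pow_mem_Dp hp40 n)
      · simpa [xx, zz, Finsupp.single_apply, hβ] using (Dp (p₃ * p₄ * p₅)).zero_mem
    · rcases eq_or_ne β α with rfl | hβ
      · simpa [xx, yy, zz, Finsupp.single_apply] using
          Dp_mono (Q := p₃ * p₄ * p₅) ⟨p₃ * p₄, by ring⟩ (inv_pow_mem_Dp hp50 n)
      · simpa [xx, yy, zz, Finsupp.single_apply, hβ] using (Dp (p₃ * p₄ * p₅)).zero_mem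
  -- membership of Dp p₂ multiples of y
  have hyyG : ∀ s ∈ Dp p₂, s • yy ι ∈ Gstar p₁ p₂ p₃ p₄ p₅ U := by
    rintro s ⟨m, k, hm⟩
    have hs : s • yy ι = (m : ℤ) • (((p₂ : ℚ) ^ k)⁻¹ • yy ι) := by
      rw [← Int.cast_smul_eq_zsmul ℚ, smul_smul]
      congr 1
      have hk : ((p₂ : ℚ)) ^ k ≠ 0 := by positivity
      field_simp
      linarith [hm]
    rw [hs]
    exact AddSubgroup.zsmul_mem _
      (AddSubgroup.subset_closure (by left; left; left; right; exact ⟨k, rfl⟩)) m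
  ext g
  simp only [Set.mem_setOf_eq]
  constructor
  · rintro ⟨hg, hdiv⟩
    -- all x and z coordinates vanish
    have hgx0 : ∀ α, g (Sum.inl α) = 0 := by
      intro α
      refine eq_zero_of_forall_dvd (Q := p₁ * p₄ * p₅) hp2 ?_ (fun n => ?_)
      · intro hdvd
        rcases (Nat.Prime.dvd_mul hp2).1 hdvd with h | h
        · rcases (Nat.Prime.dvd_mul hp2).1 h with h | h
          · exact h12 ((Nat.prime_dvd_prime_iff_eq hp2 hp1).1 h).symm
          · exact h24 ((Nat.prime_dvd_prime_iff_eq hp2 hp4).1 h)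
        · exact h25 ((Nat.prime_dvd_prime_iff_eq hp2 hp5).1 h)
      · obtain ⟨h, hh, heq⟩ := hdiv n
        refine ⟨h (Sum.inl α), hGx α h hh, ?_⟩
        rw [heq, Finsupp.smul_apply, zsmul_eq_mul]
        push_cast
        ring
    have hgz0 : ∀ α, g (Sum.inr (Sum.inr α)) = 0 := by
      intro α
      refine eq_zero_of_forall_dvd (Q := p₃ * p₄ * p₅) hp2 ?_ (fun n => ?_)
      · intro hdvd
        rcases (Nat.Prime.dvd_mul hp2).1 hdvd with h | h
        · rcases (Nat.Prime.dvd_mul hp2).1 h with h | h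
          · exact h23 ((Nat.prime_dvd_prime_iff_eq hp2 hp3).1 h)
          · exact h24 ((Nat.prime_dvd_prime_iff_eq hp2 hp4).1 h)
        · exact h25 ((Nat.prime_dvd_prime_iff_eq hp2 hp5).1 h)
      · obtain ⟨h, hh, heq⟩ := hdiv n
        refine ⟨h (Sum.inr (Sum.inr α)), hGz α h hh, ?_⟩
        rw [heq, Finsupp.smul_apply, zsmul_eq_mul]
        push_cast
        ring
    -- decompose g into the five pieces
    rw [Gstar, AddSubgroup.closure_union, AddSubgroup.closure_union,
      AddSubgroup.closure_union, AddSubgroup.closure_union] at hg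
    rw [AddSubgroup.mem_sup] at hg
    obtain ⟨t4, ht4, g5, hg5, hsum5⟩ := hg
    rw [AddSubgroup.mem_sup] at ht4
    obtain ⟨t3, ht3, g4, hg4, hsum4⟩ := ht4
    rw [AddSubgroup.mem_sup] at ht3
    obtain ⟨t2, ht2, g3, hg3, hsum3⟩ := ht3
    rw [AddSubgroup.mem_sup] at ht2
    obtain ⟨g1, hg1, g2, hg2, hsum2⟩ := ht2
    -- coordinate facts on the pieces
    have hC1x : ∀ α, g1 (Sum.inl α) ∈ Dp p₁ := by
      intro α
      refine mem_hom_of_closure (Finsupp.applyAddHom (Sum.inl α)) _ ?_ g1 hg1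
      rintro v ⟨β, n, rfl⟩
      rcases eq_or_ne β α with rfl | hβ
      · simpa [xx, Finsupp.single_apply] using inv_pow_mem_Dp hp10 n
      · simpa [xx, Finsupp.single_apply, hβ] using (Dp p₁).zero_mem
    have hC1y : g1 (Sum.inr (Sum.inl ())) = 0 := by
      have := mem_hom_of_closure (Finsupp.applyAddHom (Sum.inr (Sum.inl ())))
        (⊥ : AddSubgroup ℚ) ?_ g1 hg1
      · simpa using this
      · rintro v ⟨β, n, rfl⟩
        simp [xx, Finsupp.single_apply]
    have hC2x : ∀ α, g2 (Sum.inl α) = 0 := by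
      intro α
      have := mem_hom_of_closure (Finsupp.applyAddHom (Sum.inl α))
        (⊥ : AddSubgroup ℚ) ?_ g2 hg2
      · simpa using this
      · rintro v ⟨n, rfl⟩
        simp [yy, Finsupp.single_apply]
    have hC2y : g2 (Sum.inr (Sum.inl ())) ∈ Dp p₂ := by
      refine mem_hom_of_closure (Finsupp.applyAddHom (Sum.inr (Sum.inl ()))) _ ?_ g2 hg2
      rintro v ⟨n, rfl⟩
      simpa [yy, Finsupp.single_apply] using inv_pow_mem_Dp hp20 n
    have hC3x : ∀ α, g3 (Sum.inl α) = 0 := by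
      intro α
      have := mem_hom_of_closure (Finsupp.applyAddHom (Sum.inl α))
        (⊥ : AddSubgroup ℚ) ?_ g3 hg3
      · simpa using this
      · rintro v ⟨β, n, rfl⟩
        simp [zz, Finsupp.single_apply]
    have hC3y : g3 (Sum.inr (Sum.inl ())) = 0 := by
      have := mem_hom_of_closure (Finsupp.applyAddHom (Sum.inr (Sum.inl ())))
        (⊥ : AddSubgroup ℚ) ?_ g3 hg3
      · simpa using this
      · rintro v ⟨β, n, rfl⟩
        simp [zz, Finsupp.single_apply]
    have hC4x : ∀ α, g4 (Sum.inl α) ∈ Dp p₄ := by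
      intro α
      refine mem_hom_of_closure (Finsupp.applyAddHom (Sum.inl α)) _ ?_ g4 hg4
      rintro v ⟨β, -, n, rfl⟩
      rcases eq_or_ne β α with rfl | hβ
      · simpa [xx, zz, Finsupp.single_apply] using inv_pow_mem_Dp hp40 n
      · simpa [xx, zz, Finsupp.single_apply, hβ] using (Dp p₄).zero_mem
    have hC4y : g4 (Sum.inr (Sum.inl ())) = 0 := by
      have := mem_hom_of_closure (Finsupp.applyAddHom (Sum.inr (Sum.inl ())))
        (⊥ : AddSubgroup ℚ) ?_ g4 hg4
      · simpa using this
      · rintro v ⟨β, -, n, rfl⟩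
        simp [xx, zz, Finsupp.single_apply]
    have hC5x : ∀ α, g5 (Sum.inl α) ∈ Dp p₅ := by
      intro α
      refine mem_hom_of_closure (Finsupp.applyAddHom (Sum.inl α)) _ ?_ g5 hg5
      rintro v ⟨β, -, n, rfl⟩
      rcases eq_or_ne β α with rfl | hβ
      · simpa [xx, yy, zz, Finsupp.single_apply] using inv_pow_mem_Dp hp50 n
      · simpa [xx, yy, zz, Finsupp.single_apply, hβ] using (Dp p₅).zero_mem
    have hC5F : Finsupp.linearCombination ℚ w5 g5 = 0 := by
      have := mem_hom_of_closure
        ((Finsupp.linearCombination ℚ w5).toAddMonoidHom) (⊥ : AddSubgroup ℚ) ?_ g5 hg5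
      · simpa using this
      · rintro v ⟨β, -, n, rfl⟩
        simp [xx, yy, zz, w5, map_smul, Finsupp.linearCombination_single]
    -- the sum equation for coordinates
    have hcoord : ∀ i, g1 i + g2 i + g3 i + g4 i + g5 i = g i := by
      intro i
      rw [← hsum5, ← hsum4, ← hsum3, ← hsum2]
      simp [Finsupp.add_apply]
    -- each x-coordinate of `g5` is an integer
    have hT : ∀ α, g5 (Sum.inl α) ∈ Dp 1 := by
      intro α
      have h0 := hcoord (Sum.inl α)
      rw [hgx0 α, hC2x α, hC3x α] at h0
      have h14' : g5 (Sum.inl α) = -(g1 (Sum.inl α) + g4 (Sum.inl α)) := by linarith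
      have hmem : g5 (Sum.inl α) ∈ Dp (p₁ * p₄) := by
        rw [h14']
        exact (Dp (p₁ * p₄)).neg_mem
          ((Dp (p₁ * p₄)).add_mem (Dp_mono ⟨p₄, rfl⟩ (hC1x α))
            (Dp_mono ⟨p₁, Nat.mul_comm p₁ p₄⟩ (hC4x α)))
      exact mem_Dp_one_of_coprime hp50
        ((Nat.Prime.coprime_iff_not_dvd hp5).2 (by
          intro hd
          rcases (Nat.Prime.dvd_mul hp5).1 hd with h | h
          · exact h15 ((Nat.prime_dvd_prime_iff_eq hp5 hp1).1 h).symm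
          · exact h45 ((Nat.prime_dvd_prime_iff_eq hp5 hp4).1 h).symm))
        (hC5x α) hmem
    -- the y-coordinate of `g5` is an integer
    have hFy : g5 (Sum.inr (Sum.inl ())) ∈ Dp 1 := by
      have h5 : g5 (Sum.inr (Sum.inl ())) = Finsupp.linearCombination ℚ wx g5 := by
        have := F5_eq g5
        rw [hC5F] at this
        linarith
      rw [h5, Finsupp.linearCombination_apply, Finsupp.sum]
      apply AddSubgroup.sum_mem
      intro i _
      rcases i with α | u | β
      · simpa [wx, smul_eq_mul] using hT α
      · simpa [wx] using (Dp 1).zero_mem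
      · simpa [wx] using (Dp 1).zero_mem
    -- so the y-coordinate of g lies in Dp p₂
    have hb : g (Sum.inr (Sum.inl ())) ∈ Dp p₂ := by
      have h0 := hcoord (Sum.inr (Sum.inl ()))
      rw [hC1y, hC3y, hC4y] at h0
      have : g (Sum.inr (Sum.inl ())) = g2 (Sum.inr (Sum.inl ())) + g5 (Sum.inr (Sum.inl ())) := by
        linarith
      rw [this]
      exact (Dp p₂).add_mem hC2y (Dp_mono (one_dvd _) hFy)
    refine ⟨g (Sum.inr (Sum.inl ())), (Dp_eq_closure hp20).1 hb, ?_⟩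
    ext i
    rcases i with α | u | β
    · rw [hgx0 α]
      simp [yy, Finsupp.smul_apply, Finsupp.single_apply]
    · cases u
      simp [yy, Finsupp.smul_apply, Finsupp.single_apply]
    · rw [hgz0 β]
      simp [yy, Finsupp.smul_apply, Finsupp.single_apply]
  · rintro ⟨r, hr, rfl⟩
    have hrD : r ∈ Dp p₂ := (Dp_eq_closure hp20).2 hr
    refine ⟨hyyG r hrD, fun n => ?_⟩
    refine ⟨(r / (p₂ : ℚ) ^ n) • yy ι, hyyG _ ?_, ?_⟩
    · obtain ⟨m, k, hm⟩ := hrD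
      refine ⟨m, k + n, ?_⟩
      rw [← hm]
      have : ((p₂ : ℚ)) ^ n ≠ 0 := by positivity
      field_simp
      ring
    · rw [← Int.cast_smul_eq_zsmul ℚ, smul_smul]
      congr 1
      have : ((p₂ : ℚ)) ^ n ≠ 0 := by positivity
      push_cast
      field_simp
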